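/- arXiv:2501.10101 — 5 statements merged into one kernel-verified Lean document; each statement's English description precedes it below -/
import Mathlib

section
/- Let σ be a non-decreasing sigmoidal function with σ(x) - 1/2 odd. Then the density function φ_σ(x) := (1/2)(σ(x+1) - σ(x-1)) satisfies Σ_{k ∈ ℤ} φ_σ(x - k) = 1 for every x ∈ ℝ. -/
open Filter

/-- The density function generated by a sigmoidal function. -/
noncomputable def phiSigma (σ : ℝ → ℝ) (x : ℝ) : ℝ := (σ (x + 1) - σ (x - 1)) / 2

lemma tele_anti {g : ℕ → ℝ} {l : ℝ} (hg : Antitone g) (hl : Tendsto g atTop (nhds l)) :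
    HasSum (fun n => g n - g (n + 1)) (g 0 - l) := by
  rw [hasSum_iff_tendsto_nat_of_nonneg (fun i => sub_nonneg.mpr (hg (Nat.le_succ i)))]
  simp only [Finset.sum_range_sub' g]
  exact tendsto_const_nhds.sub hl

lemma tele_mono {g : ℕ → ℝ} {l : ℝ} (hg : Monotone g) (hl : Tendsto g atTop (nhds l)) :
    HasSum (fun n => g (n + 1) - g n) (l - g 0) := by
  rw [hasSum_iff_tendsto_nat_of_nonneg (fun i => sub_nonneg.mpr (hg (Nat.le_succ i)))]
  simp only [Finset.sum_range_sub g]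
  exact hl.sub tendsto_const_nhds

set_option maxHeartbeats 1000000 in
/-- for a non-decreasing sigmoidal function `σ` with `σ x - 1/2` odd,
the translates of the density function `φ_σ` sum to `1`: `Σ_{k ∈ ℤ} φ_σ(x - k) = 1`. -/
theorem stmt_1 (σ : ℝ → ℝ) (hmeas : Measurable σ) (hmono : Monotone σ)
    (h0 : Tendsto σ atBot (nhds 0)) (h1 : Tendsto σ atTop (nhds 1))
    (hodd : ∀ x : ℝ, σ (-x) - 1 / 2 = -(σ x - 1 / 2)) :
    ∀ x : ℝ, HasSum (fun k : ℤ => phiSigma σ (x - k)) 1 := by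
  intro x
  have hcast : ∀ {m n : ℕ}, m ≤ n → (m : ℝ) ≤ n := fun h => Nat.cast_le.mpr h
  have hbot : ∀ c : ℝ, Tendsto (fun n : ℕ => σ (x - n + c)) atTop (nhds 0) := by
    intro c
    apply h0.comp
    have h2 : Tendsto (fun n : ℕ => -(n : ℝ)) atTop atBot :=
      tendsto_neg_atTop_atBot.comp tendsto_natCast_atTop_atTop
    have h3 := tendsto_atBot_add_const_right _ (x + c) h2
    exact h3.congr (fun n => by ring)
  have htop : ∀ c : ℝ, Tendsto (fun n : ℕ => σ (x + n + c)) atTop (nhds 1) := by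
    intro c
    apply h1.comp
    have h2 := tendsto_atTop_add_const_right atTop (x + c)
      (tendsto_natCast_atTop_atTop (R := ℝ))
    exact h2.congr (fun n => by ring)
  have hA := tele_anti (g := fun n : ℕ => σ (x - n + 1))
    (fun m n h => hmono (by have := hcast h; linarith)) (hbot 1)
  have hB := tele_anti (g := fun n : ℕ => σ (x - n))
    (fun m n h => hmono (by have := hcast h; linarith))
    ((hbot 0).congr (fun n => by ring_nf))
  have hC := tele_mono (g := fun n : ℕ => σ (x + n + 1))
    (fun m n h => hmono (by have := hcast h; linarith)) (htop 1)
  have hD := tele_mono (g := fun n : ℕ => σ (x + n))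
    (fun m n h => hmono (by have := hcast h; linarith))
    ((htop 0).congr (fun n => by ring_nf))
  have hpos : HasSum (fun n : ℕ => phiSigma σ (x - ((n : ℤ) : ℝ)))
      ((σ (x + 1) + σ x) / 2) := by
    convert (hA.add hB).div_const 2 using 1
    · rfl
    · funext n
      unfold phiSigma
      push_cast
      ring_nf
    · norm_num
  have hneg : HasSum (fun n : ℕ => phiSigma σ (x - ((-(n + 1) : ℤ) : ℝ)))
      ((1 - σ (x + 1) + (1 - σ x)) / 2) := by
    convert (hC.add hD).div_const 2 using 1
    · rfl
    · funext n
      unfold phiSigma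
      push_cast
      ring_nf
    · norm_num
  have hsum := HasSum.of_nat_of_neg_add_one (f := fun k : ℤ => phiSigma σ (x - (k : ℝ))) hpos hneg
  have h1' : (σ (x + 1) + σ x) / 2 + (1 - σ (x + 1) + (1 - σ x)) / 2 = 1 := by ring
  rwa [h1'] at hsum
end

section
/- Let σ be a non-decreasing sigmoidal function with σ(x) - 1/2 odd, σ ∈ C²(ℝ) concave on [0,∞), and σ(x) = O(|x|^{-α-1}) as x → -∞ for some α > 0. Then φ_σ(x) = (σ(x+1)-σ(x-1))/2 is integrable on ℝ with ∫_ℝ φ_σ(x) dx = 1. -/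
open Filter MeasureTheory

/-- for a non-decreasing sigmoidal `σ` with `σ x - 1/2` odd, `σ ∈ C²`,
concave on `[0,∞)` and `σ(x) = O(|x|^{-α-1})` as `x → -∞` for some `α > 0`, the density
function `φ_σ` is integrable on `ℝ` with `∫_ℝ φ_σ = 1`. -/
theorem stmt_2 (σ : ℝ → ℝ) (hmeas : Measurable σ) (hmono : Monotone σ)
    (h0 : Tendsto σ atBot (nhds 0)) (h1 : Tendsto σ atTop (nhds 1))
    (hodd : ∀ x : ℝ, σ (-x) - 1 / 2 = -(σ x - 1 / 2))
    (hC2 : ContDiff ℝ 2 σ) (hconc : ConcaveOn ℝ (Set.Ici 0) σ)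
    (α : ℝ) (hα : 0 < α)
    (hdecay : σ =O[atBot] fun x : ℝ => |x| ^ (-α - 1)) :
    Integrable (phiSigma σ) ∧ ∫ x : ℝ, phiSigma σ x = 1 := by
  have hσ0 : ∀ x, 0 ≤ σ x := fun x =>
    le_of_tendsto h0 ((eventually_le_atBot x).mono fun y hy => hmono hy)
  have hσ1 : ∀ x, σ x ≤ 1 := fun x =>
    ge_of_tendsto h1 ((eventually_ge_atTop x).mono fun y hy => hmono hy)
  have hii : ∀ c d : ℝ, IntervalIntegrable σ MeasureTheory.volume c d := fun c d =>
    hmono.intervalIntegrable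
  have hmono1 : Monotone fun x : ℝ => σ (x + 1) :=
    hmono.comp fun a b h => by simpa using h
  have hmono2 : Monotone fun x : ℝ => σ (x - 1) :=
    hmono.comp fun a b h => by simpa using h
  have hφii : ∀ c d : ℝ, IntervalIntegrable (phiSigma σ) MeasureTheory.volume c d := by
    intro c d
    have := (hmono1.intervalIntegrable (μ := MeasureTheory.volume) (a := c) (b := d)).sub
      (hmono2.intervalIntegrable (μ := MeasureTheory.volume) (a := c) (b := d))
    have heq : phiSigma σ = fun x => (σ (x + 1) - σ (x - 1)) / 2 := rfl
    rw [heq]; exact this.div_const 2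
  have hφnn : ∀ x, 0 ≤ phiSigma σ x := by
    intro x
    have : σ (x - 1) ≤ σ (x + 1) := hmono (by linarith)
    unfold phiSigma; linarith
  -- key computation of the interval integral of phiSigma
  have key : ∀ a b : ℝ, (∫ x in a..b, phiSigma σ x) =
      ((∫ x in (b - 1)..(b + 1), σ x) - ∫ x in (a - 1)..(a + 1), σ x) / 2 := by
    intro a b
    have e1 : (∫ x in a..b, σ (x + 1)) = ∫ x in (a + 1)..(b + 1), σ x :=
      intervalIntegral.integral_comp_add_right σ 1
    have e2 : (∫ x in a..b, σ (x - 1)) = ∫ x in (a - 1)..(b - 1), σ x :=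
      intervalIntegral.integral_comp_sub_right σ 1
    have c1 : (∫ x in (a + 1)..(b - 1), σ x) + ∫ x in (b - 1)..(b + 1), σ x =
        ∫ x in (a + 1)..(b + 1), σ x :=
      intervalIntegral.integral_add_adjacent_intervals (hii _ _) (hii _ _)
    have c2 : (∫ x in (a - 1)..(a + 1), σ x) + ∫ x in (a + 1)..(b - 1), σ x =
        ∫ x in (a - 1)..(b - 1), σ x :=
      intervalIntegral.integral_add_adjacent_intervals (hii _ _) (hii _ _)
    have esub : (∫ x in a..b, σ (x + 1) - σ (x - 1)) =
        (∫ x in a..b, σ (x + 1)) - ∫ x in a..b, σ (x - 1) :=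
      intervalIntegral.integral_sub (hmono1.intervalIntegrable (μ := MeasureTheory.volume)) (hmono2.intervalIntegrable (μ := MeasureTheory.volume))
    have : (∫ x in a..b, phiSigma σ x) =
        ((∫ x in a..b, σ (x + 1)) - ∫ x in a..b, σ (x - 1)) / 2 := by
      rw [← esub]
      simpa [phiSigma, sub_div] using
        intervalIntegral.integral_div 2 (fun x => σ (x + 1) - σ (x - 1)) (a := a) (b := b)
    rw [this, e1, e2]
    rw [← c1, ← c2]
    ring
  -- bounds for ∫ on [c, c+2]
  have hub : ∀ c : ℝ, (∫ x in c..(c + 2), σ x) ≤ 2 := by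
    intro c
    have := intervalIntegral.integral_mono_on (by linarith : c ≤ c + 2) (hii c (c + 2))
      intervalIntegrable_const (fun x _ => hσ1 x)
    simpa using this
  have hlb : ∀ c : ℝ, 2 * σ c ≤ ∫ x in c..(c + 2), σ x := by
    intro c
    have := intervalIntegral.integral_mono_on (by linarith : c ≤ c + 2)
      intervalIntegrable_const (hii c (c + 2)) (fun x hx => hmono hx.1)
    simpa [mul_comm] using this
  have hub' : ∀ c : ℝ, (∫ x in c..(c + 2), σ x) ≤ 2 * σ (c + 2) := by
    intro c
    have := intervalIntegral.integral_mono_on (by linarith : c ≤ c + 2) (hii c (c + 2))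
      intervalIntegrable_const (fun x hx => hmono hx.2)
    simpa [mul_comm] using this
  have hnn : ∀ c : ℝ, 0 ≤ ∫ x in c..(c + 2), σ x := fun c =>
    le_trans (by have := hσ0 c; linarith) (hlb c)
  -- sequence limits
  have htop : Tendsto (fun n : ℕ => (n : ℝ)) atTop atTop := tendsto_natCast_atTop_atTop
  have hbtop : Tendsto (fun n : ℕ => -(n : ℝ)) atTop atBot :=
    tendsto_neg_atTop_atBot.comp htop
  have htop1 : Tendsto (fun n : ℕ => (n : ℝ) - 1) atTop atTop :=
    tendsto_atTop_add_const_right _ (-1) htop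
  have hbot1 : Tendsto (fun n : ℕ => -(n : ℝ) + 1) atTop atBot :=
    tendsto_atBot_add_const_right _ 1 hbtop
  have hA : Tendsto (fun n : ℕ => ∫ x in ((n : ℝ) - 1)..((n : ℝ) + 1), σ x) atTop (nhds 2) := by
    have hl : Tendsto (fun n : ℕ => 2 * σ ((n : ℝ) - 1)) atTop (nhds 2) := by
      have := (h1.comp htop1).const_mul (2 : ℝ)
      simpa using this
    refine tendsto_of_tendsto_of_tendsto_of_le_of_le hl tendsto_const_nhds
      (fun n => ?_) (fun n => ?_)
    · have := hlb ((n : ℝ) - 1)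
      have h2 : (n : ℝ) - 1 + 2 = (n : ℝ) + 1 := by ring
      rwa [h2] at this
    · have := hub ((n : ℝ) - 1)
      have h2 : (n : ℝ) - 1 + 2 = (n : ℝ) + 1 := by ring
      rwa [h2] at this
  have hB : Tendsto (fun n : ℕ => ∫ x in (-(n : ℝ) - 1)..(-(n : ℝ) + 1), σ x) atTop (nhds 0) := by
    have hu : Tendsto (fun n : ℕ => 2 * σ (-(n : ℝ) + 1)) atTop (nhds 0) := by
      have := (h0.comp hbot1).const_mul (2 : ℝ)
      simpa using this
    refine tendsto_of_tendsto_of_tendsto_of_le_of_le tendsto_const_nhds hu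
      (fun n => ?_) (fun n => ?_)
    · have := hnn (-(n : ℝ) - 1)
      have h2 : -(n : ℝ) - 1 + 2 = -(n : ℝ) + 1 := by ring
      rwa [h2] at this
    · have := hub' (-(n : ℝ) - 1)
      have h2 : -(n : ℝ) - 1 + 2 = -(n : ℝ) + 1 := by ring
      rwa [h2] at this
  have hF : Tendsto (fun n : ℕ => ∫ x in (-(n : ℝ))..((n : ℝ)), phiSigma σ x) atTop (nhds 1) := by
    have : Tendsto (fun n : ℕ =>
        ((∫ x in ((n : ℝ) - 1)..((n : ℝ) + 1), σ x) -
          ∫ x in (-(n : ℝ) - 1)..(-(n : ℝ) + 1), σ x) / 2) atTop (nhds ((2 - 0) / 2)) :=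
      (hA.sub hB).div_const 2
    simp only [key]
    convert this using 2
    norm_num
  have hFnorm : Tendsto (fun n : ℕ => ∫ x in (-(n : ℝ))..((n : ℝ)), ‖phiSigma σ x‖) atTop
      (nhds 1) := by
    refine hF.congr fun n => ?_
    exact (intervalIntegral.integral_congr fun x _ => (Real.norm_of_nonneg (hφnn x)).symm)
  have hint : Integrable (phiSigma σ) :=
    MeasureTheory.integrable_of_intervalIntegral_norm_tendsto 1
      (fun n : ℕ => (hφii (-(n : ℝ)) (n : ℝ)).1) hbtop htop hFnorm
  refine ⟨hint, ?_⟩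
  exact tendsto_nhds_unique
    (MeasureTheory.intervalIntegral_tendsto_integral hint hbtop htop) hF
end

section
/- Let σ be a non-decreasing sigmoidal function with σ(x) - 1/2 odd, σ ∈ C² concave for x ≥ 0, and σ(1) < 1. Then for every x in a compact interval [a,b] and every n ∈ ℕ with ⌈na⌉ ≤ ⌊nb⌋ - 1, one has Σ_{k=⌈na⌉}^{⌊nb⌋-1} φ_σ(nx - k) ≥ φ_σ(2) > 0, where φ_σ(x) = (σ(x+1)-σ(x-1))/2. -/
/-! Oddness of `σ - 1/2` makes `φ_σ` even, and concavity of `σ` on `[0, ∞)` makes its increments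
over intervals of length `2` decrease, so `φ_σ` is antitone on `[0, ∞)` and `φ_σ t ≥ φ_σ 2`
whenever `|t| ≤ 2`. Some integer `k` of the summation range lies within `2` of `n x`, and all
other terms are non-negative since `σ` is monotone. Finally `φ_σ 2 = (σ 3 - σ 1) / 2 > 0`: if
`σ 3 ≤ σ 1`, concavity would keep `σ` below `σ 1 < 1` on `[3, ∞)`. -/

open Filter

theorem ConcaveOn.sub_le_sub_of_le {s : Set ℝ} {f : ℝ → ℝ} (hf : ConcaveOn ℝ s f) {x y h : ℝ}
    (hx : x ∈ s) (hyh : y + h ∈ s) (hxy : x ≤ y) (hh : 0 ≤ h) :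
    f (y + h) - f y ≤ f (x + h) - f x := by
  rcases (add_nonneg (sub_nonneg.2 hxy) hh).eq_or_lt with hd | hd
  · obtain rfl : y = x := by linarith
    obtain rfl : h = 0 := by linarith
    rfl
  -- `y` and `x + h` are the convex combinations of `x` and `y + h` with swapped weights.
  set d := y - x + h
  have hweights : h / d + (y - x) / d = 1 := by field_simp; ring
  have hfy := hf.2 hx hyh (div_nonneg hh hd.le) (div_nonneg (sub_nonneg.2 hxy) hd.le) hweights
  have hfxh := hf.2 hx hyh (div_nonneg (sub_nonneg.2 hxy) hd.le) (div_nonneg hh hd.le)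
    ((add_comm _ _).trans hweights)
  have hy : h / d * x + (y - x) / d * (y + h) = y := by field_simp; ring
  have hxh : (y - x) / d * x + h / d * (y + h) = x + h := by field_simp; ring
  simp only [smul_eq_mul, hy, hxh] at hfy hfxh
  linear_combination hfy + hfxh - (f x + f (y + h)) * hweights

theorem ConcaveOn.lt_of_lt_tendsto_atTop {f : ℝ → ℝ} {a x y L : ℝ}
    (hf : ConcaveOn ℝ (Set.Ici a) f) (hlim : Tendsto f atTop (nhds L)) (hax : a ≤ x)
    (hxy : x < y) (hfx : f x < L) : f x < f y := by
  by_contra! hyx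
  have hbound : ∀ z ≥ y, f z ≤ f y := fun z hz =>
    hf.right_le_of_le_left'' hax (hax.trans (hxy.le.trans hz)) hxy hz hyx
  have : L ≤ f y := le_of_tendsto hlim (eventually_atTop.2 ⟨y, hbound⟩)
  linarith

theorem exists_mem_Icc_ceil_floor_abs_sub_le_two {u v y : ℝ} (hy : y ∈ Set.Icc u v)
    (h : ⌈u⌉ ≤ ⌊v⌋ - 1) : ∃ k ∈ Finset.Icc ⌈u⌉ (⌊v⌋ - 1), |y - k| ≤ 2 := by
  refine ⟨max ⌈u⌉ (min (⌊v⌋ - 1) ⌊y⌋),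
    Finset.mem_Icc.2 ⟨le_max_left _ _, max_le h (min_le_left _ _)⟩, abs_le.2 ⟨?_, ?_⟩⟩
  · have hu : (⌈u⌉ : ℝ) < u + 1 := Int.ceil_lt_add_one u
    have hy' : (⌊y⌋ : ℝ) ≤ y := Int.floor_le y
    push_cast
    rcases max_cases (⌈u⌉ : ℝ) (min ((⌊v⌋ : ℝ) - 1) (⌊y⌋ : ℝ)) with ⟨hm, -⟩ | ⟨hm, -⟩
    · linarith [hy.1]
    · linarith [min_le_right ((⌊v⌋ : ℝ) - 1) (⌊y⌋ : ℝ)]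
  · have hv : v < ⌊v⌋ + 1 := Int.lt_floor_add_one v
    have hy' : y < ⌊y⌋ + 1 := Int.lt_floor_add_one y
    have hk : ((min (⌊v⌋ - 1) ⌊y⌋ : ℤ) : ℝ) ≤ (max ⌈u⌉ (min (⌊v⌋ - 1) ⌊y⌋) : ℤ) := by
      exact_mod_cast le_max_right _ _
    push_cast at hk ⊢
    rcases min_cases ((⌊v⌋ : ℝ) - 1) (⌊y⌋ : ℝ) with ⟨hm, -⟩ | ⟨hm, -⟩ <;> linarith [hy.2]

section phiSigma

variable {σ : ℝ → ℝ}

theorem phiSigma_nonneg (hmono : Monotone σ) (t : ℝ) : 0 ≤ phiSigma σ t :=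
  div_nonneg (sub_nonneg.2 (hmono (by linarith))) zero_le_two

theorem phiSigma_neg (hodd : ∀ x : ℝ, σ (-x) - 1 / 2 = -(σ x - 1 / 2)) (t : ℝ) :
    phiSigma σ (-t) = phiSigma σ t := by
  have hsub := hodd (t - 1)
  have hadd := hodd (t + 1)
  rw [neg_sub] at hsub
  rw [neg_add'] at hadd
  simp only [phiSigma, neg_add_eq_sub]
  linarith

theorem phiSigma_abs (hodd : ∀ x : ℝ, σ (-x) - 1 / 2 = -(σ x - 1 / 2)) (t : ℝ) :
    phiSigma σ |t| = phiSigma σ t := by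
  rcases abs_choice t with h | h <;> rw [h]
  exact phiSigma_neg hodd t

theorem phiSigma_le_of_one_le (hconc : ConcaveOn ℝ (Set.Ici 0) σ) {s t : ℝ} (hs : 1 ≤ s)
    (hst : s ≤ t) : phiSigma σ t ≤ phiSigma σ s := by
  have key := hconc.sub_le_sub_of_le (x := s - 1) (y := t - 1) (h := 2)
    (Set.mem_Ici.2 (by linarith)) (Set.mem_Ici.2 (by linarith)) (by linarith) zero_le_two
  rw [show t - 1 + 2 = t + 1 by ring, show s - 1 + 2 = s + 1 by ring] at key
  simp only [phiSigma]
  linarith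

/-- On `[0, 1]` the oddness of `σ - 1/2` turns `φ_σ(t)` into `(σ(1 + t) + σ(1 - t) - 1) / 2`,
whose arguments both lie in `[0, ∞)`. -/
theorem phiSigma_le_of_le_one (hodd : ∀ x : ℝ, σ (-x) - 1 / 2 = -(σ x - 1 / 2))
    (hconc : ConcaveOn ℝ (Set.Ici 0) σ) {s t : ℝ} (hs : 0 ≤ s) (hst : s ≤ t) (ht : t ≤ 1) :
    phiSigma σ t ≤ phiSigma σ s := by
  have key := hconc.sub_le_sub_of_le (x := 1 - t) (y := 1 + s) (h := t - s)
    (Set.mem_Ici.2 (by linarith)) (Set.mem_Ici.2 (by linarith)) (by linarith) (by linarith)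
  rw [show 1 + s + (t - s) = t + 1 by ring, show 1 - t + (t - s) = 1 - s by ring,
    add_comm 1 s] at key
  have hs' := hodd (1 - s)
  have ht' := hodd (1 - t)
  rw [neg_sub] at hs' ht'
  simp only [phiSigma]
  linarith

theorem phiSigma_antitoneOn (hodd : ∀ x : ℝ, σ (-x) - 1 / 2 = -(σ x - 1 / 2))
    (hconc : ConcaveOn ℝ (Set.Ici 0) σ) : AntitoneOn (phiSigma σ) (Set.Ici 0) := by
  intro s hs t _ hst
  rcases le_total 1 s with h1s | hs1
  · exact phiSigma_le_of_one_le hconc h1s hst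
  rcases le_total t 1 with ht1 | h1t
  · exact phiSigma_le_of_le_one hodd hconc hs hst ht1
  · exact (phiSigma_le_of_one_le hconc le_rfl h1t).trans
      (phiSigma_le_of_le_one hodd hconc hs hs1 le_rfl)

theorem phiSigma_two_le_of_abs_le (hodd : ∀ x : ℝ, σ (-x) - 1 / 2 = -(σ x - 1 / 2))
    (hconc : ConcaveOn ℝ (Set.Ici 0) σ) {t : ℝ} (ht : |t| ≤ 2) :
    phiSigma σ 2 ≤ phiSigma σ t := by
  rw [← phiSigma_abs hodd t]
  exact phiSigma_antitoneOn hodd hconc (abs_nonneg t) (Set.mem_Ici.2 zero_le_two) ht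

theorem phiSigma_two_pos (hconc : ConcaveOn ℝ (Set.Ici 0) σ)
    (h1 : Tendsto σ atTop (nhds 1)) (hσ1 : σ 1 < 1) : 0 < phiSigma σ 2 := by
  have h13 : σ 1 < σ 3 := hconc.lt_of_lt_tendsto_atTop h1 zero_le_one (by norm_num) hσ1
  simp only [phiSigma]
  norm_num
  linarith

end phiSigma

theorem stmt_3_general (σ : ℝ → ℝ) (hmono : Monotone σ)
    (h1 : Tendsto σ atTop (nhds 1))
    (hodd : ∀ x : ℝ, σ (-x) - 1 / 2 = -(σ x - 1 / 2))
    (hconc : ConcaveOn ℝ (Set.Ici 0) σ)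
    (hσ1 : σ 1 < 1)
    (a b : ℝ) (n : ℕ)
    (hn : ⌈(n : ℝ) * a⌉ ≤ ⌊(n : ℝ) * b⌋ - 1)
    (x : ℝ) (hx : x ∈ Set.Icc a b) :
    0 < phiSigma σ 2 ∧
      phiSigma σ 2 ≤
        ∑ k ∈ Finset.Icc ⌈(n : ℝ) * a⌉ (⌊(n : ℝ) * b⌋ - 1),
          phiSigma σ ((n : ℝ) * x - (k : ℝ)) := by
  refine ⟨phiSigma_two_pos hconc h1 hσ1, ?_⟩
  have hnx : (n : ℝ) * x ∈ Set.Icc ((n : ℝ) * a) ((n : ℝ) * b) :=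
    ⟨mul_le_mul_of_nonneg_left hx.1 n.cast_nonneg, mul_le_mul_of_nonneg_left hx.2 n.cast_nonneg⟩
  obtain ⟨k, hk, hnxk⟩ := exists_mem_Icc_ceil_floor_abs_sub_le_two hnx hn
  calc phiSigma σ 2 ≤ phiSigma σ ((n : ℝ) * x - k) := phiSigma_two_le_of_abs_le hodd hconc hnxk
    _ ≤ _ := Finset.single_le_sum (f := fun k : ℤ => phiSigma σ ((n : ℝ) * x - k))
      (fun i _ => phiSigma_nonneg hmono _) hk

/-- for a non-decreasing sigmoidal `σ` with `σ x - 1/2` odd, `σ ∈ C²` concave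
on `[0,∞)` and `σ(1) < 1`, for every `x ∈ [a,b]` and `n` with `⌈na⌉ ≤ ⌊nb⌋ - 1`, one has
`Σ_{k=⌈na⌉}^{⌊nb⌋-1} φ_σ(nx - k) ≥ φ_σ(2) > 0`. -/
theorem stmt_3 (σ : ℝ → ℝ) (hmeas : Measurable σ) (hmono : Monotone σ)
    (h0 : Tendsto σ atBot (nhds 0)) (h1 : Tendsto σ atTop (nhds 1))
    (hodd : ∀ x : ℝ, σ (-x) - 1 / 2 = -(σ x - 1 / 2))
    (hC2 : ContDiff ℝ 2 σ) (hconc : ConcaveOn ℝ (Set.Ici 0) σ)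
    (hσ1 : σ 1 < 1)
    (a b : ℝ) (hab : a < b) (n : ℕ)
    (hn : ⌈(n : ℝ) * a⌉ ≤ ⌊(n : ℝ) * b⌋ - 1)
    (x : ℝ) (hx : x ∈ Set.Icc a b) :
    0 < phiSigma σ 2 ∧
      phiSigma σ 2 ≤
        ∑ k ∈ Finset.Icc ⌈(n : ℝ) * a⌉ (⌊(n : ℝ) * b⌋ - 1),
          phiSigma σ ((n : ℝ) * x - (k : ℝ)) :=
  stmt_3_general σ hmono h1 hodd hconc hσ1 a b n hn x hx
end

section
/- Let φ be a convex φ-function and f ∈ L^φ(I) with I = [a,b]. For h > 0, define the first-order Steklov function f_{1,h}(x) := (1/h) ∫_0^h f(x+t) dt (extending f periodically). Then there exists λ > 0 such that I^φ[λ(f - f_{1,h})] ≤ ω̃(λf, h)_φ for all 0 < h ≤ b - a, where ω̃(g, δ)_φ := sup_{|t| ≤ δ} I^φ[g(·+t) - g(·)] is the weak φ-modulus of smoothness. -/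
open Filter MeasureTheory
open scoped ENNReal

/-- The Orlicz modular `I^φ[g] = ∫_a^b φ(|g x|) dx`. -/
noncomputable def Iphi (φ : ℝ → ℝ) (a b : ℝ) (g : ℝ → ℝ) : ℝ≥0∞ :=
  ∫⁻ x in Set.Icc a b, ENNReal.ofReal (φ |g x|)

/-- The first-order Steklov function `f_{1,h}(x) = (1/h) ∫_0^h f(x+t) dt`. -/
noncomputable def steklov (f : ℝ → ℝ) (h : ℝ) (x : ℝ) : ℝ :=
  (1 / h) * ∫ t in (0 : ℝ)..h, f (x + t)

/-- The weak φ-modulus of smoothness `ω̃(g, δ)_φ = sup_{|t| ≤ δ} I^φ[g(·+t) - g(·)]`. -/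
noncomputable def wMod (φ : ℝ → ℝ) (a b : ℝ) (g : ℝ → ℝ) (δ : ℝ) : ℝ≥0∞ :=
  ⨆ t ∈ Set.Icc (-δ) δ, Iphi φ a b (fun x => g (x + t) - g x)


lemma convG (φ : ℝ → ℝ) (hφmono : MonotoneOn φ (Set.Ici 0))
    (hφconv : ConvexOn ℝ (Set.Ici 0) φ) : ConvexOn ℝ Set.univ (fun u => φ |u|) := by
  refine ⟨convex_univ, ?_⟩
  intro p _ q _ α β hα hβ hαβ
  have h1 : |α • p + β • q| ≤ α * |p| + β * |q| := by
    calc |α • p + β • q| ≤ |α • p| + |β • q| := abs_add_le _ _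
    _ = α * |p| + β * |q| := by
        simp [smul_eq_mul, abs_mul, abs_of_nonneg hα, abs_of_nonneg hβ]
  have h2 : φ |α • p + β • q| ≤ φ (α * |p| + β * |q|) :=
    hφmono (Set.mem_Ici.mpr (abs_nonneg _))
      (Set.mem_Ici.mpr (add_nonneg (mul_nonneg hα (abs_nonneg _))
        (mul_nonneg hβ (abs_nonneg _)))) h1
  have h3 : φ (α * |p| + β * |q|) ≤ α * φ |p| + β * φ |q| := by
    have := hφconv.2 (Set.mem_Ici.mpr (abs_nonneg p)) (Set.mem_Ici.mpr (abs_nonneg q)) hα hβ hαβ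
    simpa [smul_eq_mul] using this
  exact h2.trans h3

lemma growth (φ : ℝ → ℝ) (hφ0 : φ 0 = 0) (hφpos : ∀ u : ℝ, 0 < u → 0 < φ u)
    (hφmono : MonotoneOn φ (Set.Ici 0)) (hφconv : ConvexOn ℝ (Set.Ici 0) φ) :
    ∃ s : ℝ, 0 < s ∧ ∀ u : ℝ, 0 ≤ u → u ≤ 2 + φ u / s := by
  have hφnn : ∀ u : ℝ, 0 ≤ u → 0 ≤ φ u := by
    intro u hu
    have := hφmono (Set.mem_Ici.mpr le_rfl) (Set.mem_Ici.mpr hu) hu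
    rwa [hφ0] at this
  have h1 : φ 1 ≤ φ 2 / 2 := by
    have := hφconv.2 (Set.mem_Ici.mpr (le_refl (0:ℝ)))
      (Set.mem_Ici.mpr (by norm_num : (0:ℝ) ≤ 2))
      (by norm_num : (0:ℝ) ≤ 1/2) (by norm_num : (0:ℝ) ≤ 1/2) (by norm_num)
    simp only [smul_eq_mul, hφ0] at this
    norm_num at this
    linarith
  have hs : 0 < φ 2 - φ 1 := by
    have h2 : 0 < φ 1 := hφpos 1 one_pos
    linarith
  refine ⟨φ 2 - φ 1, hs, ?_⟩
  intro u hu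
  rcases le_or_gt u 2 with h | h
  · have := div_nonneg (hφnn u hu) hs.le
    linarith
  · have hu1 : (1:ℝ) < u := by linarith
    set θ : ℝ := (u - 2) / (u - 1) with hθ
    have hden : (0:ℝ) < u - 1 := by linarith
    have hθ0 : 0 ≤ θ := div_nonneg (by linarith) hden.le
    have hθ1 : 0 ≤ 1 - θ := by
      rw [hθ, sub_nonneg, div_le_one hden]; linarith
    have hconv := hφconv.2 (Set.mem_Ici.mpr (by norm_num : (0:ℝ) ≤ 1))
      (Set.mem_Ici.mpr (by linarith : (0:ℝ) ≤ u)) hθ0 hθ1 (by ring)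
    have hpt : θ • (1:ℝ) + (1 - θ) • u = 2 := by
      simp only [smul_eq_mul, hθ]
      field_simp
      ring
    rw [hpt] at hconv
    simp only [smul_eq_mul] at hconv
    have key : (u - 1) * (φ 2 - φ 1) ≤ φ u := by
      have h1' : 0 ≤ φ 1 := hφnn 1 (by norm_num)
      have := mul_le_mul_of_nonneg_left hconv hden.le
      have hθval : (u-1) * θ = u - 2 := by rw [hθ]; field_simp
      have hθval2 : (u-1) * (1 - θ) = 1 := by rw [hθ]; field_simp; ring
      have expand : (u - 1) * (θ * φ 1 + (1 - θ) * φ u) = (u - 2) * φ 1 + φ u := by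
        have e0 : (u - 1) * (θ * φ 1 + (1 - θ) * φ u)
            = ((u-1) * θ) * φ 1 + ((u-1) * (1 - θ)) * φ u := by ring
        rw [e0, hθval, hθval2]; ring
      have e2 : (u - 1) * (φ 2 - φ 1) + φ 1 = (u - 1) * φ 2 - (u - 2) * φ 1 := by ring
      linarith [this, expand, e2, h1']
    have : u - 1 ≤ φ u / (φ 2 - φ 1) := by
      rw [le_div_iff₀ hs]; linarith
    linarith

section helpers
lemma per_extend {f : ℝ → ℝ} {a b : ℝ} (hab : a < b) (hper : Function.Periodic f (b - a))
    (hfII : IntervalIntegrable f volume a b) :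
    IntervalIntegrable f volume a (b + (b - a)) := by
  have h2 : IntervalIntegrable f volume b (b + (b - a)) := by
    have H := hfII.comp_add_right (-(b - a))
    have heq : (fun x => f (x + -(b - a))) = f := by
      funext x
      calc f (x + -(b - a)) = f (x + -(b - a) + (b - a)) := (hper _).symm
        _ = f x := by congr 1; ring
    rw [heq] at H
    rw [show a - -(b - a) = b by ring, show b - -(b - a) = b + (b - a) by ring] at H
    exact H
  exact hfII.trans h2

lemma shift_int {g : ℝ → ℝ} {x h : ℝ} (hh : 0 < h)
    (hg : IntervalIntegrable g volume x (x + h)) :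
    MeasureTheory.IntegrableOn (fun t => g (x + t)) (Set.Ioc 0 h) volume := by
  have H := hg.comp_add_right x
  simp only [sub_self, add_sub_cancel_left] at H
  have := (intervalIntegrable_iff_integrableOn_Ioc_of_le hh.le).mp H
  simpa [add_comm] using this
end helpers

/-- there exists `λ > 0` such that
`I^φ[λ(f - f_{1,h})] ≤ ω̃(λf, h)_φ` for all `0 < h ≤ b - a`. -/
theorem stmt_8 (φ : ℝ → ℝ) (hφ0 : φ 0 = 0) (hφpos : ∀ u : ℝ, 0 < u → 0 < φ u)
    (hφcont : Continuous φ) (hφmono : MonotoneOn φ (Set.Ici 0))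
    (hφtop : Tendsto φ atTop atTop) (hφconv : ConvexOn ℝ (Set.Ici 0) φ)
    (a b : ℝ) (hab : a < b)
    (f : ℝ → ℝ) (hfmeas : Measurable f)
    (hper : Function.Periodic f (b - a))
    (hfLphi : ∃ μ : ℝ, 0 < μ ∧ Iphi φ a b (fun x => μ * f x) < ⊤) :
    ∃ lam : ℝ, 0 < lam ∧ ∀ h : ℝ, 0 < h → h ≤ b - a →
      Iphi φ a b (fun x => lam * (f x - steklov f h x))
        ≤ wMod φ a b (fun x => lam * f x) h := by
  obtain ⟨μ0, hμ0, hI⟩ := hfLphi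
  obtain ⟨s, hs, hgrow⟩ := growth φ hφ0 hφpos hφmono hφconv
  have hφnn : ∀ u : ℝ, 0 ≤ u → 0 ≤ φ u := by
    intro u hu
    have := hφmono (Set.mem_Ici.mpr le_rfl) (Set.mem_Ici.mpr hu) hu
    rwa [hφ0] at this
  set F : ℝ → ℝ := fun x => φ |μ0 * f x| with hF
  have hFmeas : Measurable F := hφcont.measurable.comp (measurable_const.mul hfmeas).abs
  have hFnn : ∀ x, 0 ≤ F x := fun x => hφnn _ (abs_nonneg _)
  have hFper : Function.Periodic F (b - a) := fun x => by simp only [hF, hper x]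
  -- F integrable on [a,b]
  have hIccfin : volume (Set.Icc a b) < ⊤ := by
    rw [Real.volume_Icc]; exact ENNReal.ofReal_lt_top
  have hFint : IntegrableOn F (Set.Icc a b) volume := by
    refine ⟨hFmeas.aestronglyMeasurable, ?_⟩
    rw [hasFiniteIntegral_iff_ofReal (ae_of_all _ fun x => hFnn x)]
    exact hI
  -- f integrable on [a,b]
  have hfint : IntegrableOn f (Set.Icc a b) volume := by
    have hbd : IntegrableOn (fun x => (2 + F x / s) / μ0) (Set.Icc a b) volume :=
      (((integrableOn_const hIccfin.ne :
        IntegrableOn (fun _ => (2:ℝ)) (Set.Icc a b) volume).add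
        (hFint.div_const s)).div_const μ0)
    refine Integrable.mono' hbd hfmeas.aestronglyMeasurable (ae_of_all _ fun x => ?_)
    have h1 := hgrow (μ0 * |f x|) (by positivity)
    rw [Real.norm_eq_abs, le_div_iff₀ hμ0]
    have : |μ0 * f x| = μ0 * |f x| := by rw [abs_mul, abs_of_pos hμ0]
    rw [hF]; simp only [this, Pi.add_apply]
    calc |f x| * μ0 = μ0 * |f x| := by ring
      _ ≤ 2 + φ (μ0 * |f x|) / s := h1
  have hfII : IntervalIntegrable f volume a b :=
    (intervalIntegrable_iff_integrableOn_Ioc_of_le hab.le).mpr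
      (hfint.mono_set Set.Ioc_subset_Icc_self)
  have hFII : IntervalIntegrable F volume a b :=
    (intervalIntegrable_iff_integrableOn_Ioc_of_le hab.le).mpr
      (hFint.mono_set Set.Ioc_subset_Icc_self)
  have hfext := per_extend hab hper hfII
  have hFext := per_extend hab hFper hFII
  set lam : ℝ := μ0 / 2 with hlamdef
  have hlam : 0 < lam := by positivity
  refine ⟨lam, hlam, ?_⟩
  intro h hh hhT
  -- restricted interval integrability of f and F on x..x+h for x ∈ [a,b]
  have hsub : ∀ x ∈ Set.Icc a b, ∀ g : ℝ → ℝ,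
      IntervalIntegrable g volume a (b + (b - a)) →
      IntervalIntegrable g volume x (x + h) := by
    intro x hx g hg
    rw [intervalIntegrable_iff_integrableOn_Ioc_of_le (by linarith [hh.le])]
    rw [intervalIntegrable_iff_integrableOn_Ioc_of_le (by linarith : a ≤ b + (b - a))] at hg
    exact hg.mono_set (Set.Ioc_subset_Ioc hx.1 (by
      have := hx.2; linarith))
  set ν : Measure ℝ := volume.restrict (Set.Ioc (0:ℝ) h) with hν
  have hνuniv : ν Set.univ = ENNReal.ofReal h := by
    simp [hν, Measure.restrict_apply_univ, Real.volume_Ioc]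
  haveI : IsFiniteMeasure ν := ⟨by rw [hνuniv]; exact ENNReal.ofReal_lt_top⟩
  haveI : NeZero ν := ⟨by
    refine Measure.measure_univ_ne_zero.mp ?_
    rw [hνuniv]; exact (ENNReal.ofReal_pos.mpr hh).ne'⟩
  have hνtoReal : (ν Set.univ).toReal = h := by
    rw [hνuniv]; exact ENNReal.toReal_ofReal hh.le
  -- pointwise Jensen estimate
  have hptAll : ∀ x ∈ Set.Icc a b,
      ENNReal.ofReal (φ |lam * (f x - steklov f h x)|)
        ≤ ENNReal.ofReal h⁻¹ *
          ∫⁻ t in Set.Ioc (0:ℝ) h, ENNReal.ofReal (φ |lam * (f x - f (x + t))|) := by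
    intro x hx
    have hx1 : Integrable (fun t => f (x + t)) ν := shift_int hh (hsub x hx f hfext)
    have hxF : Integrable (fun t => F (x + t)) ν := shift_int hh (hsub x hx F hFext)
    have hfi : Integrable (fun t => lam * (f x - f (x + t))) ν :=
      ((integrable_const (f x)).sub hx1).const_mul lam
    have hmeasG : AEStronglyMeasurable (fun t => φ |lam * (f x - f (x + t))|) ν :=
      (hφcont.measurable.comp ((measurable_const.sub
        (hfmeas.comp (measurable_const.add measurable_id))).const_mul lam).abs).aestronglyMeasurable
    have hbound : ∀ t : ℝ, ‖φ |lam * (f x - f (x + t))|‖ ≤ (F x + F (x + t)) / 2 := by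
      intro t
      rw [Real.norm_eq_abs, abs_of_nonneg (hφnn _ (abs_nonneg _))]
      have key : |lam * (f x - f (x + t))| ≤ (|μ0 * f x| + |μ0 * f (x + t)|) / 2 := by
        have h1 := abs_sub (f x) (f (x + t))
        have e : |lam * (f x - f (x + t))| = (μ0/2) * |f x - f (x + t)| := by
          rw [abs_mul, abs_of_pos hlam, hlamdef]
        have e1 : |μ0 * f x| = μ0 * |f x| := by rw [abs_mul, abs_of_pos hμ0]
        have e2 : |μ0 * f (x + t)| = μ0 * |f (x + t)| := by rw [abs_mul, abs_of_pos hμ0]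
        rw [e, e1, e2]
        nlinarith [mul_le_mul_of_nonneg_left h1 (by positivity : (0:ℝ) ≤ μ0 / 2)]
      have h2 : φ |lam * (f x - f (x + t))| ≤ φ ((|μ0 * f x| + |μ0 * f (x + t)|) / 2) :=
        hφmono (Set.mem_Ici.mpr (abs_nonneg _)) (Set.mem_Ici.mpr (by positivity)) key
      have h3 : φ ((|μ0 * f x| + |μ0 * f (x + t)|) / 2) ≤ (F x + F (x + t)) / 2 := by
        have hc := hφconv.2 (Set.mem_Ici.mpr (abs_nonneg (μ0 * f x)))
          (Set.mem_Ici.mpr (abs_nonneg (μ0 * f (x + t))))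
          (by norm_num : (0:ℝ) ≤ 1/2) (by norm_num : (0:ℝ) ≤ 1/2) (by norm_num)
        simp only [smul_eq_mul] at hc
        have harg : (|μ0 * f x| + |μ0 * f (x + t)|) / 2
            = 1/2 * |μ0 * f x| + 1/2 * |μ0 * f (x + t)| := by ring
        rw [harg]
        simp only [hF]
        linarith
      linarith
    have hgi : Integrable (fun t => φ |lam * (f x - f (x + t))|) ν :=
      Integrable.mono' (((integrable_const (F x)).add hxF).div_const 2) hmeasG
        (ae_of_all _ hbound)
    have havg : lam * (f x - steklov f h x) = ⨍ t, lam * (f x - f (x + t)) ∂ν := by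
      have hint : ∫ t, lam * (f x - f (x + t)) ∂ν
          = lam * (h * f x - ∫ t, f (x + t) ∂ν) := by
        rw [integral_const_mul, integral_sub (integrable_const _) hx1, integral_const,
          measureReal_def, hνtoReal, smul_eq_mul]
      rw [average_eq, hint, measureReal_def, hνtoReal, smul_eq_mul, steklov,
        intervalIntegral.integral_of_le hh.le]
      have : ∫ t in Set.Ioc 0 h, f (x + t) = ∫ t, f (x + t) ∂ν := rfl
      rw [this]
      have hne : h ≠ 0 := hh.ne'
      field_simp
    have hJ := (convG φ hφmono hφconv).map_average_le (μ := ν)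
      (f := fun t => lam * (f x - f (x + t)))
      ((hφcont.comp continuous_abs).continuousOn) isClosed_univ
      (ae_of_all _ fun _ => Set.mem_univ _) hfi hgi
    rw [← havg, average_eq, measureReal_def, hνtoReal, smul_eq_mul] at hJ
    calc ENNReal.ofReal (φ |lam * (f x - steklov f h x)|)
        ≤ ENNReal.ofReal (h⁻¹ * ∫ t, φ |lam * (f x - f (x + t))| ∂ν) :=
          ENNReal.ofReal_le_ofReal hJ
      _ = ENNReal.ofReal h⁻¹ * ENNReal.ofReal (∫ t, φ |lam * (f x - f (x + t))| ∂ν) :=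
          ENNReal.ofReal_mul (by positivity)
      _ = ENNReal.ofReal h⁻¹ *
          ∫⁻ t in Set.Ioc (0:ℝ) h, ENNReal.ofReal (φ |lam * (f x - f (x + t))|) := by
          rw [ofReal_integral_eq_lintegral_ofReal hgi
            (ae_of_all _ fun t => hφnn _ (abs_nonneg _))]
  -- the main chain
  set K : ℝ → ℝ → ℝ≥0∞ := fun x t => ENNReal.ofReal (φ |lam * (f x - f (x + t))|) with hK
  have hKmeas : Measurable (Function.uncurry K) := by
    apply ENNReal.measurable_ofReal.comp
    apply hφcont.measurable.comp
    exact (((hfmeas.comp measurable_fst).sub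
      (hfmeas.comp (measurable_fst.add measurable_snd))).const_mul lam).abs
  have hinner : Measurable fun x => ∫⁻ t in Set.Ioc (0:ℝ) h, K x t :=
    Measurable.lintegral_prod_right hKmeas
  set W := wMod φ a b (fun x => lam * f x) h with hW
  calc Iphi φ a b (fun x => lam * (f x - steklov f h x))
      ≤ ∫⁻ x in Set.Icc a b, (ENNReal.ofReal h⁻¹ * ∫⁻ t in Set.Ioc (0:ℝ) h, K x t) := by
        simp only [Iphi]
        exact setLIntegral_mono (measurable_const.mul hinner) hptAll
    _ = ENNReal.ofReal h⁻¹ * ∫⁻ x in Set.Icc a b, ∫⁻ t in Set.Ioc (0:ℝ) h, K x t :=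
        lintegral_const_mul _ hinner
    _ = ENNReal.ofReal h⁻¹ * ∫⁻ t in Set.Ioc (0:ℝ) h, ∫⁻ x in Set.Icc a b, K x t := by
        rw [lintegral_lintegral_swap hKmeas.aemeasurable]
    _ ≤ ENNReal.ofReal h⁻¹ * ∫⁻ _t in Set.Ioc (0:ℝ) h, W := by
        refine mul_le_mul_right ?_ _
        refine setLIntegral_mono measurable_const fun t ht => ?_
        have heq : (∫⁻ x in Set.Icc a b, K x t)
            = Iphi φ a b (fun x => lam * f (x + t) - lam * f x) := by
          simp only [Iphi, hK]
          refine lintegral_congr fun x => ?_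
          rw [mul_sub, abs_sub_comm]
        rw [heq, hW, wMod]
        exact le_biSup (fun t => Iphi φ a b fun x => lam * f (x + t) - lam * f x)
          (Set.mem_Icc.mpr ⟨by linarith [ht.1], ht.2⟩)
    _ = ENNReal.ofReal h⁻¹ * (W * volume (Set.Ioc (0:ℝ) h)) := by
        rw [setLIntegral_const]
    _ = W := by
        rw [Real.volume_Ioc, sub_zero,
          show ENNReal.ofReal h⁻¹ * (W * ENNReal.ofReal h)
            = (ENNReal.ofReal h⁻¹ * ENNReal.ofReal h) * W from by ring,
          ← ENNReal.ofReal_mul (by positivity), inv_mul_cancel₀ hh.ne',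
          ENNReal.ofReal_one, one_mul]
end

section
/- Let φ be a convex φ-function, f ∈ L^φ(I) extended periodically, and f_{1,h}(x) := (1/h) ∫_0^h f(x+t) dt. Then f_{1,h} is differentiable a.e. with f'_{1,h}(x) = (f(x+h) - f(x))/h, and for every λ > 0 and 0 < h ≤ b-a, one has I^φ[λ f'_{1,h}] ≤ ω̃((λ/h) f, h)_φ, where ω̃(g, δ)_φ := sup_{|t| ≤ δ} I^φ[g(·+t) - g(·)]. -/
open Filter MeasureTheory
open scoped ENNReal

open Set Metric in
lemma ae_hasDerivAt_integral (f : ℝ → ℝ) (hfl : LocallyIntegrable f) :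
    ∀ᵐ x : ℝ, HasDerivAt (fun y => ∫ t in (0:ℝ)..y, f t) (f x) x := by
  have hint : ∀ u v : ℝ, IntervalIntegrable f volume u v := fun u v =>
    intervalIntegrable_iff.mpr
      ((hfl.integrableOn_isCompact isCompact_uIcc).mono_set Ioc_subset_Icc_self)
  filter_upwards [IsUnifLocDoublingMeasure.ae_tendsto_average (volume : Measure ℝ) hfl 2]
    with x hx
  rw [hasDerivAt_iff_tendsto_slope]
  have hδ : Tendsto (fun y : ℝ => |y - x| / 2) (nhdsWithin x {x}ᶜ) (nhdsWithin 0 (Ioi 0)) := by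
    apply tendsto_nhdsWithin_of_tendsto_nhds_of_eventually_within
    · have hc : Continuous fun y : ℝ => |y - x| / 2 := by continuity
      have := hc.tendsto x
      simpa using this.mono_left nhdsWithin_le_nhds
    · filter_upwards [self_mem_nhdsWithin] with y hy
      have hne : y - x ≠ 0 := sub_ne_zero.mpr hy
      exact div_pos (abs_pos.mpr hne) two_pos
  have key := hx (fun y => (x + y) / 2) (fun y => |y - x| / 2) hδ ?_
  · refine key.congr' ?_
    filter_upwards [self_mem_nhdsWithin] with y hy
    have hyx : y ≠ x := hy
    have hball : closedBall ((x + y) / 2) (|y - x| / 2) = Icc (min x y) (max x y) := by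
      rw [Real.closedBall_eq_Icc]
      rcases le_total x y with hle | hle
      · rw [abs_of_nonneg (by linarith), min_eq_left hle, max_eq_right hle]
        congr 1 <;> ring
      · rw [abs_of_nonpos (by linarith), min_eq_right hle, max_eq_left hle]
        congr 1 <;> ring
    rw [hball, setAverage_eq, slope_def_field]
    have hsub : (∫ t in (0:ℝ)..y, f t) - ∫ t in (0:ℝ)..x, f t = ∫ t in x..y, f t := by
      rw [intervalIntegral.integral_interval_sub_left (hint 0 y) (hint 0 x)]
    rcases lt_or_gt_of_ne hyx with hlt | hlt
    · rw [min_eq_right hlt.le, max_eq_left hlt.le, Real.volume_real_Icc_of_le hlt.le,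
        integral_Icc_eq_integral_Ioc,
        div_eq_inv_mul, hsub, intervalIntegral.integral_symm,
        intervalIntegral.integral_of_le hlt.le, smul_eq_mul]
      have h1 : x - y ≠ 0 := by linarith
      have h2 : y - x ≠ 0 := by linarith
      field_simp
      ring
    · rw [min_eq_left hlt.le, max_eq_right hlt.le, Real.volume_real_Icc_of_le hlt.le,
        integral_Icc_eq_integral_Ioc,
        div_eq_inv_mul, hsub, intervalIntegral.integral_of_le hlt.le, smul_eq_mul]
  · filter_upwards with y
    rw [Real.closedBall_eq_Icc]
    constructor
    · rcases le_total x y with hle | hle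
      · rw [abs_of_nonneg (by linarith)]; linarith
      · rw [abs_of_nonpos (by linarith)]; linarith
    · rcases le_total x y with hle | hle
      · rw [abs_of_nonneg (by linarith)]; linarith
      · rw [abs_of_nonpos (by linarith)]; linarith

/-- `f_{1,h}` is differentiable a.e. with `f'_{1,h}(x) = (f(x+h) - f(x))/h`,
and `I^φ[λ f'_{1,h}] ≤ ω̃((λ/h) f, h)_φ` for every `λ > 0` and `0 < h ≤ b - a`. -/
theorem stmt_9 (φ : ℝ → ℝ) (hφ0 : φ 0 = 0) (hφpos : ∀ u : ℝ, 0 < u → 0 < φ u)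
    (hφcont : Continuous φ) (hφmono : MonotoneOn φ (Set.Ici 0))
    (hφtop : Tendsto φ atTop atTop) (hφconv : ConvexOn ℝ (Set.Ici 0) φ)
    (a b : ℝ) (hab : a < b)
    (f : ℝ → ℝ) (hfmeas : Measurable f)
    (hper : Function.Periodic f (b - a))
    (hfloc : LocallyIntegrable f)
    (h : ℝ) (hh : 0 < h) (hhb : h ≤ b - a) :
    (∀ᵐ x : ℝ, HasDerivAt (steklov f h) ((f (x + h) - f x) / h) x) ∧
      ∀ lam : ℝ, 0 < lam →
        Iphi φ a b (fun x => lam * ((f (x + h) - f x) / h))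
          ≤ wMod φ a b (fun x => (lam / h) * f x) h := by
  constructor
  · set F : ℝ → ℝ := fun y => ∫ t in (0:ℝ)..y, f t with hF
    have hint : ∀ u v : ℝ, IntervalIntegrable f volume u v := fun u v =>
      intervalIntegrable_iff.mpr
        ((hfloc.integrableOn_isCompact isCompact_uIcc).mono_set Set.Ioc_subset_Icc_self)
    have hstek : ∀ x : ℝ, steklov f h x = (1 / h) * (F (x + h) - F x) := by
      intro x
      rw [steklov, hF]
      congr 1
      rw [intervalIntegral.integral_comp_add_left (fun t => f t) x,
        intervalIntegral.integral_interval_sub_left (hint 0 (x + h)) (hint 0 x)]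
      norm_num
    have hae := ae_hasDerivAt_integral f hfloc
    have hae2 : ∀ᵐ x : ℝ, HasDerivAt F (f (x + h)) (x + h) := by
      have := (measurePreserving_add_right (volume : Measure ℝ) h).quasiMeasurePreserving.ae hae
      simpa using this
    filter_upwards [hae, hae2] with x hx hxh
    have hcomp : HasDerivAt (fun y => F (y + h)) (f (x + h)) x := by
      have := HasDerivAt.comp x hxh ((hasDerivAt_id x).add_const h)
      simpa [Function.comp_def] using this
    have := ((hcomp.sub (show HasDerivAt F (f x) x from hx)).const_mul (1 / h))
    have heq : (fun y => (1 / h) * (F (y + h) - F y)) = steklov f h := by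
      funext y; rw [hstek]
    simp only [Pi.sub_apply] at this; rw [heq] at this
    rw [show (f (x + h) - f x) / h = 1 / h * (f (x + h) - f x) by ring]
    exact this
  · intro lam hlam
    have hmem : h ∈ Set.Icc (-h) h := ⟨by linarith, le_refl h⟩
    have heq : Iphi φ a b (fun x => lam * ((f (x + h) - f x) / h)) =
        Iphi φ a b (fun x => (lam / h) * f (x + h) - (lam / h) * f x) := by
      unfold Iphi
      congr 1
      funext x
      congr 2
      field_simp
    rw [heq, wMod]
    exact le_biSup (fun t => Iphi φ a b (fun x => (lam / h) * f (x + t) - (lam / h) * f x)) hmem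
end
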